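/- arXiv:2405.19191 — 2 statements merged into one kernel-verified Lean document; each statement's English description precedes it below -/
import Mathlib

section
/- Let X be a pure k-dimensional simplicial complex, f : X(k) → {±1}, and X̂ the f-local lift. For any face σ̂ ∈ X̂ of dimension strictly less than k-2, the 1-skeleton of the link X̂_{σ̂} is isomorphic to the tensor product of the 1-skeleton of X_{π(σ̂)} with the complete graph on two vertices with self loops, where π forgets the signs. -/
/-!
Below the top dimension the sign condition of the local lift is void, so a face of `X̂` of size
at most `k` is an arbitrary sign decoration of a face of `X`. Hence, when `|σ'| + |τ'| ≤ k`, the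
set `τ'` lies in the link of `σ'` iff its vertices are distinct and `π τ'` lies in the link of
`π σ'`. Vertices and edges of the link have size at most `2` and `|σ'| < k - 1`, so this
describes the whole 1-skeleton of the link: a signed pair is an edge iff its underlying pair is,
and the two signed copies of one vertex are never adjacent.
-/

open scoped Classical
noncomputable section

namespace HDX

variable {V W : Type*}

/-- sign of a Bool as an integer (`true ↦ 1`, `false ↦ -1`). -/
def sgn (b : Bool) : ℤ := if b then 1 else -1

/-- projection forgetting signs -/
def proj [DecidableEq V] (σ : Finset (V × Bool)) : Finset V := σ.image Prod.fst

/-- product of the signs of a decorated face -/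
def signF (σ : Finset (V × Bool)) : ℤ := ∏ x ∈ σ, sgn x.2

/-- the `f`-local lift of a `k`-dimensional complex `X` -/
def localLift [Fintype V] [DecidableEq V] (X : Finset (Finset V)) (f : Finset V → ℤ)
    (k : ℕ) : Finset (Finset (V × Bool)) :=
  Finset.univ.filter (fun σ' => proj σ' ∈ X ∧ σ'.card = (proj σ').card ∧
    (σ'.card = k + 1 → signF σ' = f (proj σ')))

/-- the link of a face -/
def link [DecidableEq W] (X : Finset (Finset W)) (σ : Finset W) : Finset (Finset W) :=
  (X.filter (fun τ => σ ⊆ τ)).image (fun τ => τ \ σ)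

/-- degree of a face: the number of faces of one higher dimension containing it -/
def deg [DecidableEq W] (X : Finset (Finset W)) (σ : Finset W) : ℕ :=
  (X.filter (fun τ => σ ⊆ τ ∧ τ.card = σ.card + 1)).card

/-- a simplicial complex: downward closed (to nonempty subsets) -/
def DownwardClosed (X : Finset (Finset W)) : Prop :=
  ∀ τ ∈ X, ∀ σ : Finset W, σ ⊆ τ → σ.Nonempty → σ ∈ X

/-- pure `k`-dimensional -/
def Pure (X : Finset (Finset W)) (k : ℕ) : Prop :=
  (∀ τ ∈ X, τ.card ≤ k + 1) ∧ ∀ τ ∈ X, ∃ ρ ∈ X, τ ⊆ ρ ∧ ρ.card = k + 1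

/-- `(d 0, …, d (k-1))`-regular -/
def Regular (X : Finset (Finset W)) (k : ℕ) (d : ℕ → ℕ) : Prop :=
  ∀ i < k, ∀ σ ∈ X, σ.card = i + 1 → deg X σ = d i

/-- the vertices of the link of `σ` -/
def linkVert [DecidableEq W] (X : Finset (Finset W)) (σ : Finset W) : Type _ :=
  {v : W // {v} ∈ link X σ}

instance [Fintype W] [DecidableEq W] (X : Finset (Finset W)) (σ : Finset W) :
    Fintype (linkVert X σ) := Subtype.fintype _

instance [DecidableEq W] (X : Finset (Finset W)) (σ : Finset W) :
    DecidableEq (linkVert X σ) := Subtype.instDecidableEq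

/-- random walk matrix of the 1-skeleton of the link of `σ`, normalized by `dreg` -/
def linkRW [Fintype W] [DecidableEq W] (X : Finset (Finset W)) (σ : Finset W) (dreg : ℕ) :
    Matrix (linkVert X σ) (linkVert X σ) ℝ :=
  fun u w => if u.1 ≠ w.1 ∧ {u.1, w.1} ∈ link X σ then (dreg : ℝ)⁻¹ else 0

/-- signed random walk matrix of the 1-skeleton of the link of `σ` -/
def linkRWSigned [Fintype W] [DecidableEq W] (X : Finset (Finset W)) (σ : Finset W)
    (dreg : ℕ) (g : Finset W → ℤ) : Matrix (linkVert X σ) (linkVert X σ) ℝ :=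
  fun u w => if u.1 ≠ w.1 ∧ {u.1, w.1} ∈ link X σ then (g {u.1, w.1} : ℝ) / (dreg : ℝ) else 0

/-- largest absolute value of the eigenvalues other than (one copy of) the trivial
eigenvalue `1`, of a matrix: computed via the roots of the characteristic polynomial. -/
def lam {n : Type*} [Fintype n] [DecidableEq n] (M : Matrix n n ℝ) : ℝ :=
  (((M.charpoly.roots).erase 1).map (fun x => |x|)).fold max 0

/-- `λ`-two sided high dimensional expander (links normalized by their regular degrees) -/
def IsHDX [Fintype W] [DecidableEq W] (X : Finset (Finset W)) (k : ℕ) (d : ℕ → ℕ)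
    (l : ℝ) : Prop :=
  ∀ σ : Finset W, (σ = ∅ ∨ σ ∈ X) → σ.card ≤ k - 1 → lam (linkRW X σ (d σ.card)) ≤ l

/-- the ordered pairs in `S × T` that form an edge of the link of `σ` -/
def pairs [DecidableEq W] (X : Finset (Finset W)) (σ : Finset W) (S T : Finset W) :
    Finset (W × W) :=
  (S ×ˢ T).filter (fun p => p.1 ≠ p.2 ∧ {p.1, p.2} ∈ link X σ)

/-- `⟨1_S, A_σ 1_T⟩` for the random walk matrix of the link of `σ` -/
def innerRW [DecidableEq W] (X : Finset (Finset W)) (σ : Finset W) (dtop : ℕ)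
    (S T : Finset W) : ℝ :=
  ((pairs X σ S T).card : ℝ) / (dtop : ℝ)

/-- `⟨1_S, A_σ^g 1_T⟩` for the `g`-signed random walk matrix of the link of `σ` -/
def innerRWSigned [DecidableEq W] (X : Finset (Finset W)) (σ : Finset W) (dtop : ℕ)
    (g : Finset W → ℤ) (S T : Finset W) : ℝ :=
  (∑ p ∈ pairs X σ S T, (g {p.1, p.2} : ℝ)) / (dtop : ℝ)

/-- `(β, t)`-sparseness -/
def IsSparse [Fintype W] [DecidableEq W] (X : Finset (Finset W)) (k dtop : ℕ)
    (β t : ℝ) : Prop :=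
  ∀ σ ∈ X, σ.card = k - 1 → ∀ S T : Finset W,
    (∀ v ∈ S ∪ T, {v} ∈ link X σ) → ((S ∪ T).card : ℝ) ≤ t →
    innerRW X σ dtop S T ≤ β * Real.sqrt ((S.card : ℝ) * (T.card : ℝ))

lemma mem_link_iff [DecidableEq W] {X : Finset (Finset W)} {σ τ : Finset W} :
    τ ∈ link X σ ↔ ∃ ρ ∈ X, σ ⊆ ρ ∧ ρ \ σ = τ := by
  simp [link, and_assoc]

lemma mem_localLift_iff [Fintype V] [DecidableEq V] {X : Finset (Finset V)}
    {f : Finset V → ℤ} {k : ℕ} {σ' : Finset (V × Bool)} :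
    σ' ∈ localLift X f k ↔ proj σ' ∈ X ∧ σ'.card = (proj σ').card ∧
      (σ'.card = k + 1 → signF σ' = f (proj σ')) := by
  simp [localLift]

lemma card_proj_eq_iff_injOn [DecidableEq V] {σ' : Finset (V × Bool)} :
    (proj σ').card = σ'.card ↔ Set.InjOn Prod.fst (σ' : Set (V × Bool)) :=
  Finset.card_image_iff

lemma proj_union [DecidableEq V] (σ' τ' : Finset (V × Bool)) :
    proj (σ' ∪ τ') = proj σ' ∪ proj τ' :=
  Finset.image_union _ _

lemma proj_sdiff [DecidableEq V] {ρ σ' : Finset (V × Bool)}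
    (hinj : Set.InjOn Prod.fst (ρ : Set (V × Bool))) (hsub : σ' ⊆ ρ) :
    proj (ρ \ σ') = proj ρ \ proj σ' :=
  Finset.image_sdiff_of_injOn hinj hsub

/-- `hcard` keeps `σ' ∪ τ'` below the top dimension, where the lift imposes no sign condition. -/
theorem mem_link_localLift_iff [Fintype V] [DecidableEq V] {X : Finset (Finset V)}
    {f : Finset V → ℤ} {k : ℕ} {σ' τ' : Finset (V × Bool)} (hσ' : σ' ∈ localLift X f k)
    (hcard : σ'.card + τ'.card ≤ k) :
    τ' ∈ link (localLift X f k) σ' ↔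
      proj τ' ∈ link X (proj σ') ∧ (proj τ').card = τ'.card := by
  constructor
  · rw [mem_link_iff]
    rintro ⟨ρ, hρ, hsub, rfl⟩
    obtain ⟨hρX, hρcard, -⟩ := mem_localLift_iff.mp hρ
    have hinj := card_proj_eq_iff_injOn.mp hρcard.symm
    refine ⟨mem_link_iff.mpr ⟨proj ρ, hρX, Finset.image_subset_image hsub,
      (proj_sdiff hinj hsub).symm⟩, ?_⟩
    exact card_proj_eq_iff_injOn.mpr (hinj.mono (Finset.coe_subset.mpr Finset.sdiff_subset))
  · rintro ⟨hτ, hτcard⟩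
    obtain ⟨τ, hτX, hτsub, hτdiff⟩ := mem_link_iff.mp hτ
    obtain ⟨-, hσcard, -⟩ := mem_localLift_iff.mp hσ'
    have hdisjProj : Disjoint (proj σ') (proj τ') := hτdiff ▸ Finset.disjoint_sdiff
    have hdisj : Disjoint σ' τ' := hdisjProj.of_image_finset
    have hprojUnion : proj (σ' ∪ τ') = τ := by
      rw [proj_union, ← hτdiff, Finset.union_sdiff_of_subset hτsub]
    have hcardUnion : (σ' ∪ τ').card = σ'.card + τ'.card := Finset.card_union_of_disjoint hdisj
    refine mem_link_iff.mpr ⟨σ' ∪ τ', mem_localLift_iff.mpr ⟨hprojUnion ▸ hτX, ?_, ?_⟩,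
      Finset.subset_union_left, Finset.union_sdiff_cancel_left hdisj⟩
    · rw [hcardUnion, proj_union, Finset.card_union_of_disjoint hdisjProj, hσcard, hτcard]
    · omega

theorem localLift_link_tensor_general {V : Type*} [Fintype V] [DecidableEq V]
    (k : ℕ) (X : Finset (Finset V)) (f : Finset V → ℤ)
    (σ' : Finset (V × Bool)) (hmem : σ' ∈ localLift X f k) (hdim : σ'.card < k - 1) :
    (∀ (v : V) (i : Bool),
      ({(v, i)} : Finset (V × Bool)) ∈ link (localLift X f k) σ' ↔
        ({v} : Finset V) ∈ link X (proj σ')) ∧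
    (∀ (v u : V) (i j : Bool), v ≠ u →
      (({(v, i), (u, j)} : Finset (V × Bool)) ∈ link (localLift X f k) σ' ↔
        ({v, u} : Finset V) ∈ link X (proj σ'))) ∧
    (∀ (v : V) (i j : Bool), i ≠ j →
      ({(v, i), (v, j)} : Finset (V × Bool)) ∉ link (localLift X f k) σ') := by
  have hedge (τ' : Finset (V × Bool)) (hτ' : τ'.card ≤ 2) :=
    mem_link_localLift_iff (τ' := τ') hmem (by omega)
  refine ⟨fun v i => ?_, fun v u i j hvu => ?_, fun v i j hij => ?_⟩
  · simpa [proj] using hedge {(v, i)} (by simp)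
  · have hproj : proj ({(v, i), (u, j)} : Finset (V × Bool)) = {v, u} := by simp [proj]
    rw [hedge _ Finset.card_le_two, hproj, Finset.card_pair hvu,
      Finset.card_pair (by simp [hvu]), and_iff_left rfl]
  · have hproj : proj ({(v, i), (v, j)} : Finset (V × Bool)) = {v} := by simp [proj]
    rw [hedge _ Finset.card_le_two, hproj, Finset.card_pair (by simp [hij]),
      Finset.card_singleton]
    omega

/-- for a face `σ'` of the `f`-local lift of dimension strictly less
than `k-2` (i.e. `|σ'| < k-1`), the 1-skeleton of the link of `σ'` in the lift is
isomorphic (via the identity on underlying data) to the tensor product of the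
1-skeleton of the link of `π(σ')` in `X` with the complete graph on two vertices
with self loops: the vertices of the link come in both signs, adjacency ignores the
signs, and there are no edges between the two copies of a single vertex. -/
theorem localLift_link_tensor {V : Type*} [Fintype V] [DecidableEq V]
    (k : ℕ) (hk : 2 ≤ k) (X : Finset (Finset V)) (hdc : DownwardClosed X)
    (hpure : Pure X k) (f : Finset V → ℤ) (hf : ∀ τ, f τ = 1 ∨ f τ = -1)
    (σ' : Finset (V × Bool)) (hmem : σ' ∈ localLift X f k) (hdim : σ'.card < k - 1) :
    (∀ (v : V) (i : Bool),
      ({(v, i)} : Finset (V × Bool)) ∈ link (localLift X f k) σ' ↔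
        ({v} : Finset V) ∈ link X (proj σ')) ∧
    (∀ (v u : V) (i j : Bool), v ≠ u →
      (({(v, i), (u, j)} : Finset (V × Bool)) ∈ link (localLift X f k) σ' ↔
        ({v, u} : Finset V) ∈ link X (proj σ'))) ∧
    (∀ (v : V) (i j : Bool), i ≠ j →
      ({(v, i), (v, j)} : Finset (V × Bool)) ∉ link (localLift X f k) σ') :=
  localLift_link_tensor_general k X f σ' hmem hdim

end HDX
end
end

section
/- Let X be a hyper-regular k-dimensional simplicial complex that is (β, t)-sparse. Then for every signing f : X(k) → {±1}, the f-local lift X̂^f is also (β, t)-sparse. -/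
/-!
A set `U` of lifted vertices splits by sign into two sheets `U⁺, U⁻` of base vertices, with
`|U⁺| + |U⁻| = |U|`. Over a base edge `{a, b}` the product of the signs of a lifted edge is fixed
by `f`, so the sign of its endpoint over `a` determines the other sign. Sorting the lifted `S`–`T`
edges by the sign of their `S`-endpoint therefore gives two injective images among the base edges
between the projections `S₁ = S⁺ ∪ S⁻` and `T₁ = T⁺ ∪ T⁻`, which overlap only in edges between
`S₂ = S⁺ ∩ S⁻` and `T₂ = T⁺ ∩ T⁻`. Hence `e(S, T) ≤ e(S₁, T₁) + e(S₂, T₂)`, and sparsity of the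
base bounds this by `β (√(|S₁||T₁|) + √(|S₂||T₂|)) ≤ β √(|S||T|)` (Cauchy–Schwarz, using
`|S₁| + |S₂| = |S|` and `|T₁| + |T₂| = |T|`).
-/


open scoped Classical
noncomputable section

namespace HDX

variable {V W : Type*}

open Finset

lemma sqrt_mul_add_sqrt_mul_le {a b c e : ℝ} (ha : 0 ≤ a) (hb : 0 ≤ b) (hc : 0 ≤ c)
    (he : 0 ≤ e) : √(a * c) + √(b * e) ≤ √((a + b) * (c + e)) := by
  have := Real.sum_sqrt_mul_sqrt_le univ (f := ![a, b]) (g := ![c, e])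
    (by simp [Fin.forall_fin_two, ha, hb]) (by simp [Fin.forall_fin_two, hc, he])
  simpa [Fin.sum_univ_two, Real.sqrt_mul, ha, hb, add_nonneg ha hb] using this

lemma card_le_card_add_card_of_injOn_filter {α β : Type*} [DecidableEq β] {P : Finset α}
    {A B : Finset β} (g : α → Bool) (φ : α → β)
    (hinj : ∀ b, Set.InjOn φ (P.filter (g · = b))) (hA : ∀ p ∈ P, φ p ∈ A)
    (hB : ∀ p ∈ P, ∀ q ∈ P, g p = true → g q = false → φ p = φ q → φ p ∈ B) :
    #P ≤ #A + #B := by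
  let Q : Bool → Finset β := fun b => (P.filter (g · = b)).image φ
  have hQA : Q true ∪ Q false ⊆ A := by
    refine union_subset ?_ ?_ <;>
    · intro _ he
      obtain ⟨p, hp, rfl⟩ := mem_image.1 he
      exact hA p (mem_filter.1 hp).1
  have hQB : Q true ∩ Q false ⊆ B := by
    intro e he
    obtain ⟨⟨p, hp, rfl⟩, ⟨q, hq, hφ⟩⟩ := And.imp mem_image.1 mem_image.1 (mem_inter.1 he)
    exact hB p (mem_filter.1 hp).1 q (mem_filter.1 hq).1 (mem_filter.1 hp).2 (mem_filter.1 hq).2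
      hφ.symm
  calc #P = #(Q true) + #(Q false) := by
        rw [card_image_of_injOn (hinj true), card_image_of_injOn (hinj false),
          card_eq_sum_card_fiberwise (f := g) (t := univ) fun _ _ => mem_univ _, Fintype.sum_bool]
    _ = #(Q true ∪ Q false) + #(Q true ∩ Q false) := (card_union_add_card_inter _ _).symm
    _ ≤ #A + #B := add_le_add (card_le_card hQA) (card_le_card hQB)

lemma sgn_mul_sgn_eq_iff {a b a' b' : Bool} :
    sgn a * sgn b = sgn a' * sgn b' ↔ (a != b) = (a' != b') := by
  cases a <;> cases b <;> cases a' <;> cases b' <;> decide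

lemma signF_mul_self (s : Finset (V × Bool)) : signF s * signF s = 1 := by
  rw [signF, ← prod_mul_distrib]
  exact prod_eq_one fun x _ => by rcases x with ⟨_, _ | _⟩ <;> rfl

section Sheets

variable [DecidableEq V]

def sheet (S : Finset (V × Bool)) (b : Bool) : Finset V :=
  (S.filter (·.2 = b)).image Prod.fst

@[simp]
lemma mem_sheet {S : Finset (V × Bool)} {a : V} {b : Bool} : a ∈ sheet S b ↔ (a, b) ∈ S := by
  simp [sheet]

lemma sheet_true_union_sheet_false (S : Finset (V × Bool)) :
    sheet S true ∪ sheet S false = S.image Prod.fst := by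
  ext a
  simp [Bool.exists_bool, or_comm]

lemma sheet_inter_subset_image_fst (S : Finset (V × Bool)) :
    sheet S true ∩ sheet S false ⊆ S.image Prod.fst :=
  sheet_true_union_sheet_false S ▸ inter_subset_union

lemma card_sheet (S : Finset (V × Bool)) (b : Bool) : #(sheet S b) = #(S.filter (·.2 = b)) :=
  card_image_of_injOn fun _ hx _ hy hxy =>
    Prod.ext hxy ((mem_filter.1 hx).2.trans (mem_filter.1 hy).2.symm)

lemma card_image_fst_add_card_sheet_inter (S : Finset (V × Bool)) :
    #(S.image Prod.fst) + #(sheet S true ∩ sheet S false) = #S := by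
  rw [← sheet_true_union_sheet_false, card_union_add_card_inter, card_sheet, card_sheet,
    card_eq_sum_card_fiberwise (s := S) (f := Prod.snd) (t := univ) fun _ _ => mem_univ _,
    Fintype.sum_bool]

lemma mem_sheet_inter_of_mem_of_mem_not {S : Finset (V × Bool)} {a : V} {b : Bool}
    (h : (a, b) ∈ S) (h' : (a, !b) ∈ S) : a ∈ sheet S true ∩ sheet S false := by
  cases b <;> simp_all

end Sheets

/-- The link of `ρ` in `Y` projects into the link of `σ` in `X` like a 2-lift with signing `c`. -/
def LiesOverLink [DecidableEq V] (Y : Finset (Finset (V × Bool))) (ρ : Finset (V × Bool))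
    (X : Finset (Finset V)) (σ : Finset V) : Prop :=
  (∀ v, {v} ∈ link Y ρ → {v.1} ∈ link X σ) ∧
  ∃ c : Finset V → ℤ, ∀ u w, u ≠ w → {u, w} ∈ link Y ρ →
    u.1 ≠ w.1 ∧ {u.1, w.1} ∈ link X σ ∧ sgn u.2 * sgn w.2 = c {u.1, w.1}

section LiesOverLink

variable [DecidableEq V] {Y : Finset (Finset (V × Bool))} {ρ : Finset (V × Bool)}
  {X : Finset (Finset V)} {σ : Finset V}

theorem card_pairs_le_of_liesOverLink (hover : LiesOverLink Y ρ X σ) (S T : Finset (V × Bool)) :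
    #(pairs Y ρ S T) ≤
      #(pairs X σ (S.image Prod.fst) (T.image Prod.fst)) +
      #(pairs X σ (sheet S true ∩ sheet S false) (sheet T true ∩ sheet T false)) := by
  obtain ⟨c, hc⟩ := hover.2
  have hmem : ∀ p ∈ pairs Y ρ S T, p.1 ∈ S ∧ p.2 ∈ T ∧ p.1.1 ≠ p.2.1 ∧
      {p.1.1, p.2.1} ∈ link X σ ∧ sgn p.1.2 * sgn p.2.2 = c {p.1.1, p.2.1} := by
    intro p hp
    obtain ⟨⟨hS, hT⟩, hne, hlink⟩ := by simpa only [pairs, mem_filter, mem_product] using hp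
    exact ⟨hS, hT, hc p.1 p.2 hne hlink⟩
  have hparity : ∀ p ∈ pairs Y ρ S T, ∀ q ∈ pairs Y ρ S T, p.1.1 = q.1.1 → p.2.1 = q.2.1 →
      (p.1.2 != p.2.2) = (q.1.2 != q.2.2) := by
    intro p hp q hq h1 h2
    rw [← sgn_mul_sgn_eq_iff, (hmem p hp).2.2.2.2, (hmem q hq).2.2.2.2, h1, h2]
  refine card_le_card_add_card_of_injOn_filter (·.1.2) (fun p => (p.1.1, p.2.1)) ?_ ?_ ?_
  · intro b p hp q hq hφ
    obtain ⟨hpP, hpb⟩ := mem_filter.1 (mem_coe.1 hp)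
    obtain ⟨hqP, hqb⟩ := mem_filter.1 (mem_coe.1 hq)
    obtain ⟨h1, h2⟩ := Prod.mk.inj hφ
    have h3 : p.2.2 = q.2.2 := by
      simpa only [hpb, hqb, Bool.bne_right_inj] using hparity p hpP q hqP h1 h2
    exact Prod.ext (Prod.ext h1 (hpb.trans hqb.symm)) (Prod.ext h2 h3)
  · intro p hp
    obtain ⟨hS, hT, hne, hlink, -⟩ := hmem p hp
    exact mem_filter.2 ⟨mem_product.2 ⟨mem_image_of_mem _ hS, mem_image_of_mem _ hT⟩, hne, hlink⟩
  · intro p hp q hq hpb hqb hφ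
    obtain ⟨hpS, hpT, hne, hlink, -⟩ := hmem p hp
    obtain ⟨hqS, hqT, -⟩ := hmem q hq
    obtain ⟨h1, h2⟩ := Prod.mk.inj hφ
    have hflip : q.2.2 = !p.2.2 := by simpa [hpb, hqb] using hparity q hq p hp h1.symm h2.symm
    have hq1 : q.1 = (p.1.1, !p.1.2) := Prod.ext h1.symm (by rw [hpb, hqb]; rfl)
    have hq2 : q.2 = (p.2.1, !p.2.2) := Prod.ext h2.symm hflip
    exact mem_filter.2 ⟨mem_product.2 ⟨mem_sheet_inter_of_mem_of_mem_not hpS (hq1 ▸ hqS),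
      mem_sheet_inter_of_mem_of_mem_not hpT (hq2 ▸ hqT)⟩, hne, hlink⟩

theorem innerRW_le_add_of_liesOverLink (hover : LiesOverLink Y ρ X σ) (dtop : ℕ)
    (S T : Finset (V × Bool)) :
    innerRW Y ρ dtop S T ≤ innerRW X σ dtop (S.image Prod.fst) (T.image Prod.fst) +
      innerRW X σ dtop (sheet S true ∩ sheet S false) (sheet T true ∩ sheet T false) := by
  rw [innerRW, innerRW, innerRW, ← add_div]
  gcongr
  exact_mod_cast card_pairs_le_of_liesOverLink hover S T

theorem innerRW_le_of_liesOverLink {dtop : ℕ} {β t : ℝ}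
    (hsparse : ∀ S T : Finset V, (∀ v ∈ S ∪ T, {v} ∈ link X σ) → (#(S ∪ T) : ℝ) ≤ t →
      innerRW X σ dtop S T ≤ β * √(#S * #T))
    (hover : LiesOverLink Y ρ X σ) (S T : Finset (V × Bool))
    (hvert : ∀ v ∈ S ∪ T, {v} ∈ link Y ρ) (ht : (#(S ∪ T) : ℝ) ≤ t) :
    innerRW Y ρ dtop S T ≤ β * √(#S * #T) := by
  rcases S.eq_empty_or_nonempty with rfl | hS
  · simp [innerRW, pairs]
  rcases T.eq_empty_or_nonempty with rfl | hT
  · simp [innerRW, pairs]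
  set S₁ := S.image Prod.fst
  set T₁ := T.image Prod.fst
  set S₂ := sheet S true ∩ sheet S false
  set T₂ := sheet T true ∩ sheet T false
  have hunion : S₁ ∪ T₁ = (S ∪ T).image Prod.fst := (image_union _ _).symm
  have hvert₁ : ∀ v ∈ S₁ ∪ T₁, {v} ∈ link X σ := by
    rw [hunion]
    rintro _ hv
    obtain ⟨x, hx, rfl⟩ := mem_image.1 hv
    exact hover.1 x (hvert x hx)
  have ht₁ : (#(S₁ ∪ T₁) : ℝ) ≤ t := by
    rw [hunion]
    exact le_trans (by exact_mod_cast card_image_le) ht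
  have hsub : S₂ ∪ T₂ ⊆ S₁ ∪ T₁ :=
    union_subset_union (sheet_inter_subset_image_fst S) (sheet_inter_subset_image_fst T)
  have h₁ := hsparse S₁ T₁ hvert₁ ht₁
  have h₂ := hsparse S₂ T₂ (fun v hv => hvert₁ v (hsub hv))
    (le_trans (by exact_mod_cast card_le_card hsub) ht₁)
  have hβ : 0 ≤ β := by
    refine nonneg_of_mul_nonneg_left (le_trans (by unfold innerRW; positivity) h₁) ?_
    exact Real.sqrt_pos.2 (mul_pos (by exact_mod_cast (hS.image _).card_pos)
      (by exact_mod_cast (hT.image _).card_pos))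
  have hcardS : (#S₁ + #S₂ : ℝ) = #S := by exact_mod_cast card_image_fst_add_card_sheet_inter S
  have hcardT : (#T₁ + #T₂ : ℝ) = #T := by exact_mod_cast card_image_fst_add_card_sheet_inter T
  calc innerRW Y ρ dtop S T ≤ innerRW X σ dtop S₁ T₁ + innerRW X σ dtop S₂ T₂ :=
        innerRW_le_add_of_liesOverLink hover dtop S T
    _ ≤ β * √(#S₁ * #T₁) + β * √(#S₂ * #T₂) := add_le_add h₁ h₂
    _ ≤ β * √((#S₁ + #S₂) * (#T₁ + #T₂)) := by
        rw [← mul_add]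
        gcongr
        exact sqrt_mul_add_sqrt_mul_le (by positivity) (by positivity) (by positivity)
          (by positivity)
    _ = β * √(#S * #T) := by rw [hcardS, hcardT]

end LiesOverLink

section LocalLift

variable [Fintype V] [DecidableEq V] {X : Finset (Finset V)} {f : Finset V → ℤ} {k : ℕ}
  {σ' : Finset (V × Bool)}

theorem proj_mem_link_of_mem_link_localLift {U : Finset (V × Bool)}
    (hU : U ∈ link (localLift X f k) σ') :
    proj U ∈ link X (proj σ') ∧ Set.InjOn Prod.fst (U : Set (V × Bool)) ∧
      (σ'.card + U.card = k + 1 → signF σ' * signF U = f (proj σ' ∪ proj U)) := by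
  obtain ⟨τ, hτ, rfl⟩ := mem_image.1 hU
  obtain ⟨hτ, hστ⟩ := mem_filter.1 hτ
  obtain ⟨hX, hcard, hsign⟩ := (mem_filter.1 hτ).2
  have hinj : Set.InjOn Prod.fst (τ : Set (V × Bool)) := card_image_iff.1 hcard.symm
  have hunion : proj σ' ∪ proj (τ \ σ') = proj τ := by
    rw [proj, proj, ← image_union, union_sdiff_of_subset hστ, proj]
  refine ⟨?_, hinj.mono (coe_subset.2 sdiff_subset), fun hsum => ?_⟩
  · rw [proj, proj, image_sdiff_of_injOn hinj hστ]
    exact mem_image.2 ⟨proj τ, mem_filter.2 ⟨hX, image_subset_image hστ⟩, rfl⟩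
  · rw [hunion, ← hsign (by rw [← card_sdiff_add_card_eq_card hστ]; omega), signF, signF, signF,
      mul_comm, prod_sdiff hστ]

theorem liesOverLink_localLift (hk : 2 ≤ k) (hσ' : σ'.card = k - 1) :
    LiesOverLink (localLift X f k) σ' X (proj σ') := by
  refine ⟨fun v hv => ?_, fun e => signF σ' * f (proj σ' ∪ e), fun u w huw hedge => ?_⟩
  · simpa [proj] using (proj_mem_link_of_mem_link_localLift hv).1
  obtain ⟨hlink, hinj, hsign⟩ := proj_mem_link_of_mem_link_localLift hedge
  have hproj : proj {u, w} = {u.1, w.1} := by simp [proj]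
  refine ⟨fun h => huw (hinj (by simp) (by simp) h), hproj ▸ hlink, ?_⟩
  show _ = signF σ' * f (proj σ' ∪ {u.1, w.1})
  rw [← hproj, ← hsign (by rw [card_pair huw]; omega), ← mul_assoc, signF_mul_self, one_mul,
    signF, prod_pair huw]

end LocalLift

theorem localLift_sparse_general {V : Type*} [Fintype V] [DecidableEq V]
    (k : ℕ) (hk : 2 ≤ k) (X : Finset (Finset V)) (d : ℕ → ℕ)
    (β t : ℝ) (hsparse : IsSparse X k (d (k - 1)) β t)
    (f : Finset V → ℤ) :
    IsSparse (localLift X f k) k (d (k - 1)) β t := by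
  intro σ' hσ' hσ'card S T hvert ht
  obtain ⟨hX, hcard, -⟩ := (mem_filter.1 hσ').2
  exact innerRW_le_of_liesOverLink (hsparse (proj σ') hX (hcard ▸ hσ'card))
    (liesOverLink_localLift hk hσ'card) S T hvert ht

/-- if a hyper-regular `k`-dimensional complex `X` is
`(β,t)`-sparse, then for every ±1 signing `f` of its `k`-faces, the `f`-local
lift is also `(β,t)`-sparse. -/
theorem localLift_sparse {V : Type*} [Fintype V] [DecidableEq V]
    (k : ℕ) (hk : 2 ≤ k) (X : Finset (Finset V)) (hdc : DownwardClosed X)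
    (hpure : Pure X k) (d : ℕ → ℕ) (hreg : Regular X k d)
    (β t : ℝ) (hsparse : IsSparse X k (d (k - 1)) β t)
    (f : Finset V → ℤ) (hf : ∀ τ, f τ = 1 ∨ f τ = -1) :
    IsSparse (localLift X f k) k (d (k - 1)) β t :=
  localLift_sparse_general k hk X d β t hsparse f

end HDX
end
end
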